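/- arXiv:1501.06756 — 2 statements merged into one kernel-verified Lean document; each statement's English description precedes it below -/
import Mathlib

section
/- Let n ≥ 2, k ≥ 0, 1 ≤ i ≤ n+1 (with the convention g_{σ_n}g_{σ_{n−1}}⋯g_{σ_i} = 1 when i = n+1), and let c be in the image of F_n. Then there exist h ≤ k, elements c_1,…,c_h in the image of F_n, and a K-linear combination M of Markov elements such that, in TL̂_{n+1}(q), c·X^k·g_{σ_n}g_{σ_{n−1}}⋯g_{σ_i} = Σ_{j=1}^{h} c_j·X^j + M. -/
open FreeAlgebra

/-- `V(x,y) = x y x + x y + y x + x + y + 1`. -/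
def Vel {R : Type*} [Ring R] (x y : R) : R :=
  x * y * x + x * y + y * x + x + y + 1

/-- Defining relations of the affine Temperley–Lieb algebra `TL̂_{n+1}(q)` of type `Ã_n`.
Generators are indexed by `Fin (n+1)`: for `i < n` the index `i` stands for `g_{σ_{i+1}}`,
and the index `n` (i.e. `Fin.last n`) stands for `g_{a_{n+1}}`.  For `n = 1` only the
quadratic relations remain, so `TLhat K q 1` is `TL̂_2(q)` (with generators
`t_{σ_1} = g 0` and `t_{a_2} = g 1`). -/
inductive ATLRel (K : Type*) [CommRing K] (q : K) (n : ℕ) :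
    FreeAlgebra K (Fin (n + 1)) → FreeAlgebra K (Fin (n + 1)) → Prop
  | quad (i : Fin (n + 1)) :
      ATLRel K q n (ι K i * ι K i) ((q - 1) • ι K i + algebraMap K _ q)
  | comm_ss (i j : Fin (n + 1)) (hi : (i : ℕ) < n) (hj : (j : ℕ) < n)
      (hd : 2 ≤ Nat.dist (i : ℕ) (j : ℕ)) :
      ATLRel K q n (ι K i * ι K j) (ι K j * ι K i)
  | comm_sa (hn : 2 ≤ n) (i : Fin (n + 1)) (h1 : 1 ≤ (i : ℕ)) (h2 : (i : ℕ) + 2 ≤ n) :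
      ATLRel K q n (ι K i * ι K (Fin.last n)) (ι K (Fin.last n) * ι K i)
  | braid_ss (i j : Fin (n + 1)) (hj : (j : ℕ) < n) (hij : (j : ℕ) = (i : ℕ) + 1) :
      ATLRel K q n (ι K i * ι K j * ι K i) (ι K j * ι K i * ι K j)
  | braid_sa (hn : 2 ≤ n) (i : Fin (n + 1)) (h : (i : ℕ) = 0 ∨ (i : ℕ) + 1 = n) :
      ATLRel K q n (ι K i * ι K (Fin.last n) * ι K i)
        (ι K (Fin.last n) * ι K i * ι K (Fin.last n))
  | v_ss (i j : Fin (n + 1)) (hj : (j : ℕ) < n) (hij : (j : ℕ) = (i : ℕ) + 1) :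
      ATLRel K q n (Vel (ι K i) (ι K j)) 0
  | v_s1a (hn : 2 ≤ n) (i : Fin (n + 1)) (hi : (i : ℕ) = 0) :
      ATLRel K q n (Vel (ι K i) (ι K (Fin.last n))) 0
  | v_sna (hn : 2 ≤ n) (i : Fin (n + 1)) (hi : (i : ℕ) + 1 = n) :
      ATLRel K q n (Vel (ι K i) (ι K (Fin.last n))) 0

/-- The affine Temperley–Lieb algebra `TL̂_{n+1}(q)`. -/
abbrev TLhat (K : Type*) [CommRing K] (q : K) (n : ℕ) :=
  RingQuot (ATLRel K q n)

/-- Defining relations of the type `A` Temperley–Lieb algebra `TL_n(q)` with `n`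
generators `g_{σ_1}, …, g_{σ_n}`; index `i : Fin n` stands for `g_{σ_{i+1}}`. -/
inductive TLARel (K : Type*) [CommRing K] (q : K) (n : ℕ) :
    FreeAlgebra K (Fin n) → FreeAlgebra K (Fin n) → Prop
  | quad (i : Fin n) :
      TLARel K q n (ι K i * ι K i) ((q - 1) • ι K i + algebraMap K _ q)
  | comm (i j : Fin n) (hd : 2 ≤ Nat.dist (i : ℕ) (j : ℕ)) :
      TLARel K q n (ι K i * ι K j) (ι K j * ι K i)
  | braid (i j : Fin n) (hij : (j : ℕ) = (i : ℕ) + 1) :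
      TLARel K q n (ι K i * ι K j * ι K i) (ι K j * ι K i * ι K j)
  | vrel (i j : Fin n) (hij : (j : ℕ) = (i : ℕ) + 1) :
      TLARel K q n (Vel (ι K i) (ι K j)) 0

/-- The Temperley–Lieb algebra `TL_n(q)` of type `A` (abstract presentation). -/
abbrev TLA (K : Type*) [CommRing K] (q : K) (n : ℕ) :=
  RingQuot (TLARel K q n)

variable (K : Type*) [CommRing K] (q : K) (n : ℕ)

/-- The generator `g_i` of `TL̂_{n+1}(q)`. -/
noncomputable def gg (i : Fin (n + 1)) : TLhat K q n :=
  RingQuot.mkAlgHom K (ATLRel K q n) (ι K i)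

/-- The inverse `q⁻¹ (g_i - (q-1))` of the generator `g_i` of `TL̂_{n+1}(q)`. -/
noncomputable def ggInv [Invertible q] (i : Fin (n + 1)) : TLhat K q n :=
  ⅟q • (gg K q n i - algebraMap K _ (q - 1))

/-- The generator `g_{σ_{i+1}}` of `TL_n(q)`. -/
noncomputable def ga (i : Fin n) : TLA K q n :=
  RingQuot.mkAlgHom K (TLARel K q n) (ι K i)

/-- The inverse `q⁻¹ (g - (q-1))` of a generator of `TL_n(q)`. -/
noncomputable def gaInv [Invertible q] (i : Fin n) : TLA K q n :=
  ⅟q • (ga K q n i - algebraMap K _ (q - 1))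

/-- The index of `g_{σ_n}` in `TL̂_{n+1}(q)`. -/
def sigmaTop : Fin (n + 1) := ⟨n - 1, Nat.lt_succ_of_le (Nat.sub_le n 1)⟩

/-- The index of `g_{σ_{n-1}}` in `TL̂_{n+1}(q)`. -/
def sigmaSub : Fin (n + 1) := ⟨n - 2, Nat.lt_succ_of_le (Nat.sub_le n 2)⟩

/-- `F` is the canonical homomorphism `F_n : TL̂_n(q) → TL̂_{n+1}(q)`, determined by
`t_{σ_i} ↦ g_{σ_i}` for `1 ≤ i ≤ n-1` and `t_{a_n} ↦ g_{σ_n} g_{a_{n+1}} g_{σ_n}⁻¹`. -/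
def IsF [Invertible q] (F : TLhat K q (n - 1) →ₐ[K] TLhat K q n) : Prop :=
  (∀ i : Fin (n - 1 + 1), (i : ℕ) < n - 1 →
      F (gg K q (n - 1) i) =
        gg K q n (Fin.castLE (Nat.succ_le_succ (Nat.sub_le n 1)) i)) ∧
  F (gg K q (n - 1) (Fin.last (n - 1))) =
    gg K q n (sigmaTop n) * gg K q n (Fin.last n) * ggInv K q n (sigmaTop n)

/-- Markov elements: `A g_{σ_n}^ε B` with `A, B` in the image of `F_n` and `ε ∈ {0,1}`. -/
def IsMarkov [Invertible q] (F : TLhat K q (n - 1) →ₐ[K] TLhat K q n)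
    (x : TLhat K q n) : Prop :=
  ∃ A B : TLhat K q (n - 1), ∃ ε : ℕ, ε ≤ 1 ∧
    x = F A * gg K q n (sigmaTop n) ^ ε * F B

/-- A trace on a `K`-algebra `R`: a `K`-linear map with `τ(xy) = τ(yx)`. -/
def IsTrace {R : Type*} [Ring R] [Algebra K R] (τ : R →ₗ[K] K) : Prop :=
  ∀ x y : R, τ (x * y) = τ (y * x)

/-- The Dynkin automorphism `ψ` of `TL̂_{n+1}(q)`: `g_i ↦ g_{i+1}` cyclically, i.e.
`g_{σ_1} ↦ g_{σ_2} ↦ ⋯ ↦ g_{σ_n} ↦ g_{a_{n+1}} ↦ g_{σ_1}`. -/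
def IsDynkin (ψ : TLhat K q n ≃ₐ[K] TLhat K q n) : Prop :=
  ∀ i : Fin (n + 1), ψ (gg K q n i) = gg K q n (i + 1)

/-- `X = g_{σ_n} g_{σ_{n-1}} ⋯ g_{σ_1} g_{a_{n+1}}`. -/
noncomputable def Xel : TLhat K q n :=
  (List.ofFn fun t : Fin n =>
      gg K q n ⟨n - 1 - (t : ℕ),
        Nat.lt_succ_of_le (le_trans (Nat.sub_le _ _) (Nat.sub_le _ _))⟩).prod *
    gg K q n (Fin.last n)

/-- `Z = g_{σ_{n-1}} g_{σ_{n-2}} ⋯ g_{σ_1} · F_n(t_{a_n})`. -/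
noncomputable def Zel [Invertible q] (F : TLhat K q (n - 1) →ₐ[K] TLhat K q n) :
    TLhat K q n :=
  (List.ofFn fun t : Fin (n - 1) =>
      gg K q n ⟨n - 2 - (t : ℕ),
        Nat.lt_succ_of_le (le_trans (Nat.sub_le _ _) (Nat.sub_le _ _))⟩).prod *
    F (gg K q (n - 1) (Fin.last (n - 1)))

/-- `g_{σ_n} g_{σ_{n-1}} ⋯ g_{σ_i}`, with the convention that it is `1` when `i = n + 1`. -/
noncomputable def tailChain (i : ℕ) : TLhat K q n :=
  (List.ofFn fun t : Fin (n + 1 - i) =>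
      gg K q n ⟨n - 1 - (t : ℕ),
        Nat.lt_succ_of_le (le_trans (Nat.sub_le _ _) (Nat.sub_le _ _))⟩).prod

/-- `g_{σ_{i₀}} g_{σ_{i₀ - 1}} ⋯ g_{σ_1}`, with the convention that it is `1` when `i₀ = 0`. -/
noncomputable def headChain (i₀ : ℕ) (h : i₀ ≤ n) : TLhat K q n :=
  (List.ofFn fun t : Fin i₀ =>
      gg K q n ⟨i₀ - 1 - (t : ℕ),
        Nat.lt_succ_of_le (le_trans (le_trans (Nat.sub_le _ _) (Nat.sub_le _ _)) h)⟩).prod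

/-- `TL_n(q)` realized as the subalgebra of `TL̂_{n+1}(q)` generated by `g_{σ_1}, …, g_{σ_n}`. -/
noncomputable def TLsub : Subalgebra K (TLhat K q n) :=
  Algebra.adjoin K (Set.range fun i : Fin n => gg K q n (Fin.castSucc i))

/-- The generator `g_{σ_{i+1}}` as an element of the subalgebra `TL_n(q)`. -/
noncomputable def sgen (i : Fin n) : TLsub K q n :=
  ⟨gg K q n (Fin.castSucc i), Algebra.subset_adjoin (Set.mem_range_self i)⟩

/-- The inverse `q⁻¹ (g - (q-1))` of `sgen` inside `TL_n(q)`. -/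
noncomputable def sgenInv [Invertible q] (i : Fin n) : TLsub K q n :=
  ⅟q • (sgen K q n i - algebraMap K _ (q - 1))

/-- `g_{σ_1} ⋯ g_{σ_{n-1}} g_{σ_n} g_{σ_{n-1}}⁻¹ ⋯ g_{σ_1}⁻¹` in `TL̂_{n+1}(q)`. -/
noncomputable def EnTarget [Invertible q] : TLhat K q n :=
  (List.ofFn fun t : Fin (n - 1) =>
      gg K q n (Fin.castLE (le_trans (Nat.sub_le n 1) (Nat.le_succ n)) t)).prod *
    gg K q n (sigmaTop n) *
    (List.ofFn fun t : Fin (n - 1) =>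
      ggInv K q n ⟨n - 2 - (t : ℕ),
        Nat.lt_succ_of_le (le_trans (Nat.sub_le _ _) (Nat.sub_le _ _))⟩).prod

/-- `E` is the canonical homomorphism `E_n : TL̂_{n+1}(q) → TL_n(q)`, determined by
`g_{σ_i} ↦ g_{σ_i}` for `1 ≤ i ≤ n` and
`g_{a_{n+1}} ↦ g_{σ_1} ⋯ g_{σ_{n-1}} g_{σ_n} g_{σ_{n-1}}⁻¹ ⋯ g_{σ_1}⁻¹`. -/
def IsE [Invertible q] (E : TLhat K q n →ₐ[K] TLsub K q n) : Prop :=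
  (∀ i : Fin n,
    (E (gg K q n (Fin.castSucc i)) : TLhat K q n) = gg K q n (Fin.castSucc i)) ∧
  (E (gg K q n (Fin.last n)) : TLhat K q n) = EnTarget K q n
/-! ### Auxiliary development for `first_form_reduction` -/

/-- Generator with a natural-number index (taken mod `n+1`). -/
noncomputable def gN (m : ℕ) : TLhat K q n :=
  gg K q n ⟨m % (n + 1), Nat.mod_lt _ n.succ_pos⟩

theorem gN_eq {K : Type*} [CommRing K] {q : K} {n : ℕ} {m : ℕ} (h : m < n + 1) :
    gN K q n m = gg K q n ⟨m, h⟩ := by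
  unfold gN; congr 1; exact Fin.ext (Nat.mod_eq_of_lt h)

theorem gN_last {K : Type*} [CommRing K] {q : K} {n : ℕ} :
    gN K q n n = gg K q n (Fin.last n) :=
  gN_eq (Nat.lt_succ_self n)

theorem gg_rel {K : Type*} [CommRing K] {q : K} {n : ℕ}
    {x y : FreeAlgebra K (Fin (n + 1))} (h : ATLRel K q n x y) :
    RingQuot.mkAlgHom K (ATLRel K q n) x = RingQuot.mkAlgHom K (ATLRel K q n) y :=
  RingQuot.mkAlgHom_rel K h

theorem quad_gg {K : Type*} [CommRing K] {q : K} {n : ℕ} (i : Fin (n + 1)) :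
    gg K q n i * gg K q n i = (q - 1) • gg K q n i + algebraMap K _ q := by
  have h := gg_rel (ATLRel.quad (K := K) (q := q) (n := n) i)
  simpa [gg, map_mul, map_add, map_smul, AlgHom.commutes] using h

theorem quad_gN {K : Type*} [CommRing K] {q : K} {n : ℕ} (m : ℕ) :
    gN K q n m * gN K q n m = (q - 1) • gN K q n m + algebraMap K _ q :=
  quad_gg _

theorem comm_ss' {K : Type*} [CommRing K] {q : K} {n : ℕ} {m m' : ℕ}
    (hm : m < n) (hm' : m' < n) (hd : m' + 2 ≤ m) :
    gN K q n m * gN K q n m' = gN K q n m' * gN K q n m := by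
  rw [gN_eq (by omega), gN_eq (m := m') (by omega)]
  have h := gg_rel (ATLRel.comm_ss (K := K) (q := q) (n := n)
    ⟨m, by omega⟩ ⟨m', by omega⟩ hm hm' (by simp [Nat.dist]; omega))
  simpa [gg, map_mul] using h

theorem comm_sa' {K : Type*} [CommRing K] {q : K} {n : ℕ} (hn : 2 ≤ n) {m : ℕ}
    (h1 : 1 ≤ m) (h2 : m + 2 ≤ n) :
    gN K q n m * gN K q n n = gN K q n n * gN K q n m := by
  rw [gN_eq (m := m) (by omega), gN_last]
  have h := gg_rel (ATLRel.comm_sa (K := K) (q := q) (n := n) hn ⟨m, by omega⟩ h1 h2)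
  simpa [gg, map_mul] using h

theorem braid_ss' {K : Type*} [CommRing K] {q : K} {n : ℕ} {m : ℕ}
    (h : m + 1 < n) :
    gN K q n m * gN K q n (m + 1) * gN K q n m
      = gN K q n (m + 1) * gN K q n m * gN K q n (m + 1) := by
  rw [gN_eq (m := m) (by omega), gN_eq (m := m + 1) (by omega)]
  have h := gg_rel (ATLRel.braid_ss (K := K) (q := q) (n := n)
    ⟨m, by omega⟩ ⟨m + 1, by omega⟩ h rfl)
  simpa [gg, map_mul] using h

theorem braid_sa0 {K : Type*} [CommRing K] {q : K} {n : ℕ} (hn : 2 ≤ n) :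
    gN K q n 0 * gN K q n n * gN K q n 0
      = gN K q n n * gN K q n 0 * gN K q n n := by
  rw [gN_eq (m := 0) (by omega), gN_last]
  have h := gg_rel (ATLRel.braid_sa (K := K) (q := q) (n := n) hn ⟨0, by omega⟩ (Or.inl rfl))
  simpa [gg, map_mul] using h

theorem braid_saTop {K : Type*} [CommRing K] {q : K} {n : ℕ} (hn : 2 ≤ n) :
    gN K q n (n - 1) * gN K q n n * gN K q n (n - 1)
      = gN K q n n * gN K q n (n - 1) * gN K q n n := by
  rw [gN_eq (m := n - 1) (by omega), gN_last]
  have h := gg_rel (ATLRel.braid_sa (K := K) (q := q) (n := n) hn ⟨n - 1, by omega⟩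
    (Or.inr (by simp; omega)))
  simpa [gg, map_mul] using h

theorem gg_mul_ggInv {K : Type*} [CommRing K] {q : K} [Invertible q] {n : ℕ}
    (i : Fin (n + 1)) : gg K q n i * ggInv K q n i = 1 := by
  rw [ggInv, mul_smul_comm, mul_sub, quad_gg, Algebra.algebraMap_eq_smul_one,
    Algebra.algebraMap_eq_smul_one, mul_smul_comm, mul_one]
  rw [add_sub_cancel_left, smul_smul, invOf_mul_self, one_smul]

theorem ggInv_mul_gg {K : Type*} [CommRing K] {q : K} [Invertible q] {n : ℕ}
    (i : Fin (n + 1)) : ggInv K q n i * gg K q n i = 1 := by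
  rw [ggInv, smul_mul_assoc, sub_mul, quad_gg, Algebra.algebraMap_eq_smul_one,
    Algebra.algebraMap_eq_smul_one, smul_mul_assoc, one_mul]
  rw [add_sub_cancel_left, smul_smul, invOf_mul_self, one_smul]

/-- Descending chain `g_t g_{t-1} ⋯ g_{t-(l-1)}` (indices truncated at 0). -/
noncomputable def dc (t l : ℕ) : TLhat K q n :=
  ((List.range l).map fun s => gN K q n (t - s)).prod

theorem dc_zero {K : Type*} [CommRing K] {q : K} {n : ℕ} (t : ℕ) :
    dc K q n t 0 = 1 := by simp [dc]

theorem dc_succ_right {K : Type*} [CommRing K] {q : K} {n : ℕ} (t l : ℕ) :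
    dc K q n t (l + 1) = dc K q n t l * gN K q n (t - l) := by
  simp [dc, List.range_succ]

theorem dc_succ_left {K : Type*} [CommRing K] {q : K} {n : ℕ} (t l : ℕ) :
    dc K q n t (l + 1) = gN K q n t * dc K q n (t - 1) l := by
  have hf : ((fun s => gN K q n (t - s)) ∘ Nat.succ) = fun s => gN K q n (t - 1 - s) := by
    funext s
    show gN K q n (t - Nat.succ s) = gN K q n (t - 1 - s)
    congr 1
    omega
  rw [dc, List.range_succ_eq_map, List.map_cons, List.prod_cons, List.map_map, Nat.sub_zero,
    hf, dc]

/-- A generator commuting with every entry commutes with the chain. -/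
theorem dc_comm {K : Type*} [CommRing K] {q : K} {n : ℕ} {t l m : ℕ}
    (h : ∀ s < l, gN K q n (t - s) * gN K q n m = gN K q n m * gN K q n (t - s)) :
    dc K q n t l * gN K q n m = gN K q n m * dc K q n t l := by
  induction l generalizing t with
  | zero => simp [dc_zero]
  | succ l ih =>
    have h0 : gN K q n t * gN K q n m = gN K q n m * gN K q n t := by
      simpa using h 0 (by omega)
    have h' : ∀ s < l, gN K q n (t - 1 - s) * gN K q n m
        = gN K q n m * gN K q n (t - 1 - s) := by
      intro s hs
      have hh := h (s + 1) (by omega)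
      have : t - (s + 1) = t - 1 - s := by omega
      rwa [this] at hh
    rw [dc_succ_left]
    calc gN K q n t * dc K q n (t-1) l * gN K q n m
        = gN K q n t * (dc K q n (t-1) l * gN K q n m) := by rw [mul_assoc]
      _ = gN K q n t * (gN K q n m * dc K q n (t-1) l) := by rw [ih h']
      _ = gN K q n t * gN K q n m * dc K q n (t-1) l := by rw [mul_assoc]
      _ = gN K q n m * gN K q n t * dc K q n (t-1) l := by rw [h0]
      _ = gN K q n m * (gN K q n t * dc K q n (t-1) l) := by rw [mul_assoc]

/-- Full descending chain absorbs a braid: `(g_m ⋯ g_0) g_j = g_{j-1} (g_m ⋯ g_0)`. -/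
theorem dc_braid {K : Type*} [CommRing K] {q : K} {n : ℕ} {m j : ℕ}
    (hm : m < n) (hj1 : 1 ≤ j) (hjm : j ≤ m) :
    dc K q n m (m + 1) * gN K q n j = gN K q n (j - 1) * dc K q n m (m + 1) := by
  induction m with
  | zero => omega
  | succ m ih =>
    rcases Nat.lt_or_ge j (m + 1) with hj | hj
    · -- j ≤ m : use ih and commute g_{m+1} with g_j, g_{j-1}
      rw [dc_succ_left, Nat.add_sub_cancel, mul_assoc, ih (by omega) (by omega),
        ← mul_assoc, comm_ss' (by omega) (by omega) (by omega), mul_assoc]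
    · -- j = m + 1 : braid at the top
      have hj' : j = m + 1 := by omega
      subst hj'
      have hdc : dc K q n (m + 1) (m + 2) =
          gN K q n (m + 1) * (gN K q n m * dc K q n (m - 1) m) := by
        rw [dc_succ_left, Nat.add_sub_cancel, dc_succ_left]
      have hcomm : dc K q n (m - 1) m * gN K q n (m + 1)
          = gN K q n (m + 1) * dc K q n (m - 1) m := by
        apply dc_comm
        intro s hs
        exact (comm_ss' (by omega) (by omega) (by omega)).symm
      rw [hdc, Nat.add_sub_cancel]
      calc gN K q n (m + 1) * (gN K q n m * dc K q n (m-1) m) * gN K q n (m + 1)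
          = gN K q n (m + 1) * gN K q n m * (dc K q n (m-1) m * gN K q n (m + 1)) := by
            simp only [mul_assoc]
        _ = gN K q n (m + 1) * gN K q n m * (gN K q n (m + 1) * dc K q n (m-1) m) := by
            rw [hcomm]
        _ = gN K q n (m + 1) * gN K q n m * gN K q n (m + 1) * dc K q n (m-1) m := by
            rw [← mul_assoc]
        _ = gN K q n m * gN K q n (m + 1) * gN K q n m * dc K q n (m-1) m := by
            rw [← braid_ss' (by omega)]
        _ = gN K q n m * (gN K q n (m + 1) * (gN K q n m * dc K q n (m-1) m)) := by
            simp only [mul_assoc]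

/-- Identify `List.ofFn` descending products with `dc`. -/
theorem ofFn_dc {K : Type*} [CommRing K] {q : K} {n : ℕ} {len : ℕ} {t : ℕ}
    (ht : t < n + 1) (f : Fin len → Fin (n + 1)) (hf : ∀ s, (f s : ℕ) = t - (s : ℕ)) :
    (List.ofFn fun s => gg K q n (f s)).prod = dc K q n t len := by
  induction len generalizing t with
  | zero => simp [dc_zero]
  | succ len ih =>
    rw [List.ofFn_succ, List.prod_cons, dc_succ_left]
    congr 1
    · rw [gN_eq ht]
      congr 1
      exact Fin.ext (by simpa using hf 0)
    · refine ih (t := t - 1) (by omega) (fun s => f s.succ) (fun s => ?_)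
      rw [hf s.succ]
      simp [Fin.val_succ]
      omega

theorem Xel_eq {K : Type*} [CommRing K] {q : K} {n : ℕ} :
    Xel K q n = dc K q n (n - 1) n * gN K q n n := by
  rw [Xel, gN_last]
  congr 1
  exact ofFn_dc (by omega) _ (fun s => rfl)

theorem tailChain_eq {K : Type*} [CommRing K] {q : K} {n : ℕ} (i : ℕ) :
    tailChain K q n i = dc K q n (n - 1) (n + 1 - i) := by
  rw [tailChain]
  exact ofFn_dc (by omega) _ (fun s => rfl)

theorem Zel_eq {K : Type*} [CommRing K] {q : K} [Invertible q] {n : ℕ}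
    (F : TLhat K q (n - 1) →ₐ[K] TLhat K q n) :
    Zel K q n F = dc K q n (n - 2) (n - 1) * F (gg K q (n - 1) (Fin.last (n - 1))) := by
  rw [Zel]
  congr 1
  exact ofFn_dc (by omega) _ (fun s => rfl)

theorem gg_sigmaTop {K : Type*} [CommRing K] {q : K} {n : ℕ} :
    gg K q n (sigmaTop n) = gN K q n (n - 1) := (gN_eq (by omega)).symm

theorem gg_sigmaSub {K : Type*} [CommRing K] {q : K} {n : ℕ} :
    gg K q n (sigmaSub n) = gN K q n (n - 2) := (gN_eq (by omega)).symm

/-- `g_{σ_j} ∈ Im Fₙ` for `1 ≤ j ≤ n - 1` (index `j - 1 ≤ n - 2`). -/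
theorem gN_mem_range {K : Type*} [CommRing K] {q : K} [Invertible q] {n : ℕ}
    (hn : 2 ≤ n) {F : TLhat K q (n - 1) →ₐ[K] TLhat K q n} (hF : IsF K q n F)
    {j : ℕ} (hj : j ≤ n - 2) : gN K q n j ∈ F.range := by
  have h : F (gg K q (n - 1) ⟨j, by omega⟩) = gN K q n j := by
    rw [hF.1 ⟨j, by omega⟩ (by show j < n - 1; omega), gN_eq (by omega)]
    rfl
  exact ⟨_, h⟩

theorem fel_mem_range {K : Type*} [CommRing K] {q : K} [Invertible q] {n : ℕ}
    {F : TLhat K q (n - 1) →ₐ[K] TLhat K q n} :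
    F (gg K q (n - 1) (Fin.last (n - 1))) ∈ F.range := ⟨_, rfl⟩

theorem range_eq_adjoin {K : Type*} [CommRing K] {q : K} [Invertible q] {n : ℕ}
    (F : TLhat K q (n - 1) →ₐ[K] TLhat K q n) :
    F.range = Algebra.adjoin K
      (Set.range fun i : Fin (n - 1 + 1) => F (gg K q (n - 1) i)) := by
  have h1 : Algebra.adjoin K (Set.range (gg K q (n - 1))) = ⊤ := by
    have h2 : Set.range (gg K q (n - 1)) =
        (RingQuot.mkAlgHom K (ATLRel K q (n - 1))) '' Set.range (FreeAlgebra.ι K) := by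
      rw [← Set.range_comp]; rfl
    rw [h2, ← AlgHom.map_adjoin, FreeAlgebra.adjoin_range_ι, Algebra.map_top]
    exact (AlgHom.range_eq_top _).mpr (RingQuot.mkAlgHom_surjective _ _)
  rw [← Algebra.map_top F, ← h1, AlgHom.map_adjoin, ← Set.range_comp]
  rfl

noncomputable def sInvTop [Invertible q] : TLhat K q n := ggInv K q n (sigmaTop n)
noncomputable def sInvSub [Invertible q] : TLhat K q n := ggInv K q n (sigmaSub n)

noncomputable def fel [Invertible q] (F : TLhat K q (n - 1) →ₐ[K] TLhat K q n) :
    TLhat K q n := F (gg K q (n - 1) (Fin.last (n - 1)))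

section CoreIdentities

variable {K : Type*} [CommRing K] {q : K} [Invertible q] {n : ℕ}

theorem gN_mul_sInvTop : gN K q n (n - 1) * sInvTop K q n = 1 := by
  rw [sInvTop, ← gg_sigmaTop, gg_mul_ggInv]

theorem sInvTop_mul_gN : sInvTop K q n * gN K q n (n - 1) = 1 := by
  rw [sInvTop, ← gg_sigmaTop, ggInv_mul_gg]

theorem gN_mul_sInvSub : gN K q n (n - 2) * sInvSub K q n = 1 := by
  rw [sInvSub, ← gg_sigmaSub, gg_mul_ggInv]

theorem sInvSub_mul_gN : sInvSub K q n * gN K q n (n - 2) = 1 := by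
  rw [sInvSub, ← gg_sigmaSub, ggInv_mul_gg]

theorem fel_eq {F : TLhat K q (n - 1) →ₐ[K] TLhat K q n} (hF : IsF K q n F) :
    fel K q n F = gN K q n (n - 1) * gN K q n n * sInvTop K q n := by
  rw [fel, hF.2, gg_sigmaTop, ← gN_last, sInvTop]

theorem X_decomp (hn : 2 ≤ n) :
    Xel K q n = gN K q n (n - 1) * (dc K q n (n - 2) (n - 1) * gN K q n n) := by
  have h := dc_succ_left (K := K) (q := q) (n := n) (n - 1) (n - 1)
  simp only [show n - 1 + 1 = n from by omega, show n - 1 - 1 = n - 2 from by omega] at h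
  rw [Xel_eq, h, mul_assoc]

theorem dcZ_decomp (hn : 2 ≤ n) :
    dc K q n (n - 2) (n - 1) = gN K q n (n - 2) * dc K q n (n - 3) (n - 2) := by
  have h := dc_succ_left (K := K) (q := q) (n := n) (n - 2) (n - 2)
  simp only [show n - 2 + 1 = n - 1 from by omega, show n - 2 - 1 = n - 3 from by omega] at h
  exact h

theorem dc_braid' (hn : 2 ≤ n) {j : ℕ} (hj1 : 1 ≤ j) (hj2 : j ≤ n - 1) :
    dc K q n (n - 1) n * gN K q n j = gN K q n (j - 1) * dc K q n (n - 1) n := by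
  have h := dc_braid (K := K) (q := q) (n := n) (m := n - 1) (j := j)
    (by omega) hj1 (by omega)
  simpa only [show n - 1 + 1 = n from by omega] using h

theorem Z_mul_sig (hn : 2 ≤ n) {F : TLhat K q (n - 1) →ₐ[K] TLhat K q n}
    (hF : IsF K q n F) :
    Zel K q n F * gN K q n (n - 1) = dc K q n (n - 2) (n - 1) * (gN K q n (n - 1) * gN K q n n) := by
  rw [Zel_eq, ← fel, fel_eq hF]
  calc dc K q n (n-2) (n-1) * (gN K q n (n-1) * gN K q n n * sInvTop K q n) * gN K q n (n-1)
      = dc K q n (n-2) (n-1) * (gN K q n (n-1) * gN K q n n *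
          (sInvTop K q n * gN K q n (n-1))) := by simp only [mul_assoc]
    _ = dc K q n (n-2) (n-1) * (gN K q n (n-1) * gN K q n n) := by
        rw [sInvTop_mul_gN, mul_one]

theorem sigZsig (hn : 2 ≤ n) {F : TLhat K q (n - 1) →ₐ[K] TLhat K q n}
    (hF : IsF K q n F) :
    gN K q n (n - 1) * Zel K q n F * gN K q n (n - 1) = gN K q n (n - 2) * Xel K q n := by
  have hcomm : dc K q n (n - 3) (n - 2) * gN K q n (n - 1)
      = gN K q n (n - 1) * dc K q n (n - 3) (n - 2) := by
    apply dc_comm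
    intro s hs
    exact comm_ss' (by omega) (by omega) (by omega) |>.symm
  have hbraid : gN K q n (n - 1) * gN K q n (n - 2) * gN K q n (n - 1)
      = gN K q n (n - 2) * gN K q n (n - 1) * gN K q n (n - 2) := by
    have h := braid_ss' (K := K) (q := q) (n := n) (m := n - 2) (by omega)
    simp only [show n - 2 + 1 = n - 1 from by omega] at h
    exact h.symm
  calc gN K q n (n-1) * Zel K q n F * gN K q n (n-1)
      = gN K q n (n-1) * (Zel K q n F * gN K q n (n-1)) := by rw [mul_assoc]
    _ = gN K q n (n-1) * (dc K q n (n-2) (n-1) * (gN K q n (n-1) * gN K q n n)) := by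
        rw [Z_mul_sig hn hF]
    _ = gN K q n (n-1) * (gN K q n (n-2) * (dc K q n (n-3) (n-2) * gN K q n (n-1))
          * gN K q n n) := by rw [dcZ_decomp hn]; simp only [mul_assoc]
    _ = gN K q n (n-1) * (gN K q n (n-2) * (gN K q n (n-1) * dc K q n (n-3) (n-2))
          * gN K q n n) := by rw [hcomm]
    _ = (gN K q n (n-1) * gN K q n (n-2) * gN K q n (n-1)) *
          (dc K q n (n-3) (n-2) * gN K q n n) := by simp only [mul_assoc]
    _ = (gN K q n (n-2) * gN K q n (n-1) * gN K q n (n-2)) *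
          (dc K q n (n-3) (n-2) * gN K q n n) := by rw [hbraid]
    _ = gN K q n (n-2) * (gN K q n (n-1) * ((gN K q n (n-2) * dc K q n (n-3) (n-2))
          * gN K q n n)) := by simp only [mul_assoc]
    _ = gN K q n (n-2) * Xel K q n := by rw [← dcZ_decomp hn, ← X_decomp hn]

theorem X_from_Z (hn : 2 ≤ n) {F : TLhat K q (n - 1) →ₐ[K] TLhat K q n}
    (hF : IsF K q n F) :
    Xel K q n = sInvSub K q n * (gN K q n (n - 1) * Zel K q n F * gN K q n (n - 1)) := by
  rw [sigZsig hn hF, ← mul_assoc, sInvSub_mul_gN, one_mul]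

theorem X_mul_sig (hn : 2 ≤ n) {F : TLhat K q (n - 1) →ₐ[K] TLhat K q n}
    (hF : IsF K q n F) :
    Xel K q n * gN K q n (n - 1) = (q - 1) • Xel K q n
      + q • (sInvSub K q n * (gN K q n (n - 1) * Zel K q n F)) := by
  conv_lhs => rw [X_from_Z hn hF]
  calc sInvSub K q n * (gN K q n (n-1) * Zel K q n F * gN K q n (n-1)) * gN K q n (n-1)
      = sInvSub K q n * (gN K q n (n-1) * Zel K q n F) *
          (gN K q n (n-1) * gN K q n (n-1)) := by simp only [mul_assoc]
    _ = sInvSub K q n * (gN K q n (n-1) * Zel K q n F) *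
          ((q - 1) • gN K q n (n-1) + algebraMap K _ q) := by rw [quad_gN]
    _ = (q - 1) • (sInvSub K q n * (gN K q n (n-1) * Zel K q n F * gN K q n (n-1)))
          + q • (sInvSub K q n * (gN K q n (n-1) * Zel K q n F)) := by
        rw [mul_add, mul_smul_comm, Algebra.algebraMap_eq_smul_one, mul_smul_comm, mul_one]
        simp only [mul_assoc]
    _ = (q - 1) • Xel K q n
          + q • (sInvSub K q n * (gN K q n (n-1) * Zel K q n F)) := by
        rw [← X_from_Z hn hF]

theorem X_gN (hn : 2 ≤ n) {j : ℕ} (hj1 : 1 ≤ j) (hj2 : j ≤ n - 2) :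
    Xel K q n * gN K q n j = gN K q n (j - 1) * Xel K q n := by
  calc Xel K q n * gN K q n j
      = dc K q n (n-1) n * (gN K q n n * gN K q n j) := by rw [Xel_eq, mul_assoc]
    _ = dc K q n (n-1) n * (gN K q n j * gN K q n n) := by
        rw [← comm_sa' hn hj1 (by omega)]
    _ = dc K q n (n-1) n * gN K q n j * gN K q n n := by rw [mul_assoc]
    _ = gN K q n (j-1) * dc K q n (n-1) n * gN K q n n := by
        rw [dc_braid' hn hj1 (by omega)]
    _ = gN K q n (j-1) * Xel K q n := by rw [Xel_eq, mul_assoc]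

theorem X_g0 (hn : 2 ≤ n) {F : TLhat K q (n - 1) →ₐ[K] TLhat K q n}
    (hF : IsF K q n F) :
    Xel K q n * gN K q n 0 = fel K q n F * Xel K q n := by
  have p1 : dc K q n (n-1) n = dc K q n (n-1) (n-1) * gN K q n 0 := by
    have h := dc_succ_right (K := K) (q := q) (n := n) (n-1) (n-1)
    simpa only [show n - 1 + 1 = n from by omega,
      show n - 1 - (n - 1) = 0 from by omega] using h
  have p2 : dc K q n (n-1) (n-1) = gN K q n (n-1) * dc K q n (n-2) (n-2) := by
    have h := dc_succ_left (K := K) (q := q) (n := n) (n-1) (n-2)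
    simpa only [show n - 2 + 1 = n - 1 from by omega,
      show n - 1 - 1 = n - 2 from by omega] using h
  have p3 : dc K q n (n-2) (n-2) * gN K q n n = gN K q n n * dc K q n (n-2) (n-2) := by
    apply dc_comm
    intro s hs
    exact comm_sa' hn (by omega) (by omega)
  have p4 : dc K q n (n-2) (n-2) * gN K q n 0 = dc K q n (n-2) (n-1) := by
    have h := dc_succ_right (K := K) (q := q) (n := n) (n-2) (n-2)
    rw [show n - 2 + 1 = n - 1 from by omega,
      show n - 2 - (n - 2) = 0 from by omega] at h
    exact h.symm
  have hrhs : fel K q n F * Xel K q n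
      = gN K q n (n-1) * (gN K q n n * (dc K q n (n-2) (n-1) * gN K q n n)) := by
    rw [fel_eq hF, X_decomp hn]
    calc gN K q n (n-1) * gN K q n n * sInvTop K q n *
          (gN K q n (n-1) * (dc K q n (n-2) (n-1) * gN K q n n))
        = gN K q n (n-1) * (gN K q n n * (sInvTop K q n * gN K q n (n-1) *
            (dc K q n (n-2) (n-1) * gN K q n n))) := by simp only [mul_assoc]
      _ = gN K q n (n-1) * (gN K q n n * (dc K q n (n-2) (n-1) * gN K q n n)) := by
          rw [sInvTop_mul_gN, one_mul]
  calc Xel K q n * gN K q n 0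
      = dc K q n (n-1) (n-1) * gN K q n 0 * (gN K q n n * gN K q n 0) := by
        rw [Xel_eq, p1]; simp only [mul_assoc]
    _ = dc K q n (n-1) (n-1) * (gN K q n 0 * gN K q n n * gN K q n 0) := by
        simp only [mul_assoc]
    _ = dc K q n (n-1) (n-1) * (gN K q n n * gN K q n 0 * gN K q n n) := by
        rw [braid_sa0 hn]
    _ = gN K q n (n-1) * dc K q n (n-2) (n-2) * (gN K q n n * gN K q n 0 * gN K q n n) := by
        rw [p2]
    _ = gN K q n (n-1) * (dc K q n (n-2) (n-2) * gN K q n n * (gN K q n 0 * gN K q n n)) := by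
        simp only [mul_assoc]
    _ = gN K q n (n-1) * (gN K q n n * dc K q n (n-2) (n-2) * (gN K q n 0 * gN K q n n)) := by
        rw [p3]
    _ = gN K q n (n-1) * (gN K q n n * (dc K q n (n-2) (n-2) * gN K q n 0 * gN K q n n)) := by
        simp only [mul_assoc]
    _ = gN K q n (n-1) * (gN K q n n * (dc K q n (n-2) (n-1) * gN K q n n)) := by
        rw [p4]
    _ = fel K q n F * Xel K q n := hrhs.symm

theorem X_fel (hn : 2 ≤ n) {F : TLhat K q (n - 1) →ₐ[K] TLhat K q n}
    (hF : IsF K q n F) :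
    Xel K q n * fel K q n F = gN K q n (n - 2) * Xel K q n := by
  have hb := dc_braid' (K := K) (q := q) (n := n) hn (j := n - 1) (by omega) (by omega)
  rw [show n - 1 - 1 = n - 2 from by omega] at hb
  calc Xel K q n * fel K q n F
      = dc K q n (n-1) n * gN K q n n * (gN K q n (n-1) * gN K q n n * sInvTop K q n) := by
        rw [Xel_eq, fel_eq hF]
    _ = dc K q n (n-1) n * (gN K q n n * gN K q n (n-1) * gN K q n n) * sInvTop K q n := by
        simp only [mul_assoc]
    _ = dc K q n (n-1) n * (gN K q n (n-1) * gN K q n n * gN K q n (n-1)) * sInvTop K q n := by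
        rw [braid_saTop hn]
    _ = dc K q n (n-1) n * gN K q n (n-1) * (gN K q n n * (gN K q n (n-1) * sInvTop K q n)) := by
        simp only [mul_assoc]
    _ = dc K q n (n-1) n * gN K q n (n-1) * gN K q n n := by
        rw [gN_mul_sInvTop, mul_one]
    _ = gN K q n (n-2) * dc K q n (n-1) n * gN K q n n := by rw [hb]
    _ = gN K q n (n-2) * Xel K q n := by rw [Xel_eq, mul_assoc]

theorem sInvSub_mem_range (hn : 2 ≤ n) {F : TLhat K q (n - 1) →ₐ[K] TLhat K q n}
    (hF : IsF K q n F) : sInvSub K q n ∈ F.range := by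
  rw [sInvSub, ggInv]
  refine Subalgebra.smul_mem _ (sub_mem ?_ (Subalgebra.algebraMap_mem _ _)) _
  rw [gg_sigmaSub]
  exact gN_mem_range hn hF le_rfl

theorem dc_mem_range (hn : 2 ≤ n) {F : TLhat K q (n - 1) →ₐ[K] TLhat K q n}
    (hF : IsF K q n F) {t : ℕ} (ht : t ≤ n - 2) (l : ℕ) :
    dc K q n t l ∈ F.range := by
  induction l with
  | zero => rw [dc_zero]; exact one_mem _
  | succ l ih =>
    rw [dc_succ_right]
    exact mul_mem ih (gN_mem_range hn hF (by omega))

theorem Zel_mem_range (hn : 2 ≤ n) {F : TLhat K q (n - 1) →ₐ[K] TLhat K q n}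
    (hF : IsF K q n F) : Zel K q n F ∈ F.range := by
  rw [Zel_eq]
  exact mul_mem (dc_mem_range hn hF le_rfl _) ⟨_, rfl⟩

theorem shift_one (hn : 2 ≤ n) {F : TLhat K q (n - 1) →ₐ[K] TLhat K q n}
    (hF : IsF K q n F) {s : TLhat K q n} (hs : s ∈ F.range) :
    ∃ s' ∈ F.range, Xel K q n * s = s' * Xel K q n := by
  rw [range_eq_adjoin F] at hs
  induction hs using Algebra.adjoin_induction with
  | mem x hx =>
    obtain ⟨i, rfl⟩ := hx
    by_cases hi : (i : ℕ) < n - 1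
    · have hx' : F (gg K q (n - 1) i) = gN K q n (i : ℕ) := by
        rw [hF.1 i hi, gN_eq (by omega)]
        rfl
      rcases Nat.eq_zero_or_pos (i : ℕ) with h0 | h1
      · refine ⟨fel K q n F, ⟨_, rfl⟩, ?_⟩
        show Xel K q n * F (gg K q (n - 1) i) = fel K q n F * Xel K q n
        rw [hx', h0]
        exact X_g0 hn hF
      · refine ⟨gN K q n ((i : ℕ) - 1), gN_mem_range hn hF (by omega), ?_⟩
        show Xel K q n * F (gg K q (n - 1) i) = gN K q n ((i : ℕ) - 1) * Xel K q n
        rw [hx']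
        exact X_gN hn (by omega) (by omega)
    · have hil : i = Fin.last (n - 1) := Fin.ext (by simp; omega)
      subst hil
      exact ⟨gN K q n (n - 2), gN_mem_range hn hF le_rfl, X_fel hn hF⟩
  | algebraMap r =>
    exact ⟨algebraMap K _ r, Subalgebra.algebraMap_mem _ r, (Algebra.commutes r _).symm⟩
  | add x y hx hy ihx ihy =>
    obtain ⟨x', hx', ex⟩ := ihx
    obtain ⟨y', hy', ey⟩ := ihy
    exact ⟨x' + y', add_mem hx' hy', by rw [mul_add, ex, ey, add_mul]⟩
  | mul x y hx hy ihx ihy =>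
    obtain ⟨x', hx', ex⟩ := ihx
    obtain ⟨y', hy', ey⟩ := ihy
    refine ⟨x' * y', mul_mem hx' hy', ?_⟩
    rw [← mul_assoc, ex, mul_assoc, ey, ← mul_assoc]

theorem shift_pow (hn : 2 ≤ n) {F : TLhat K q (n - 1) →ₐ[K] TLhat K q n}
    (hF : IsF K q n F) (k : ℕ) :
    ∀ s ∈ F.range, ∃ s' ∈ F.range, Xel K q n ^ k * s = s' * Xel K q n ^ k := by
  induction k with
  | zero => exact fun s hs => ⟨s, hs, by simp⟩
  | succ k ih =>
    intro s hs
    obtain ⟨s₁, hs₁, e₁⟩ := shift_one hn hF hs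
    obtain ⟨s₂, hs₂, e₂⟩ := ih s₁ hs₁
    refine ⟨s₂, hs₂, ?_⟩
    rw [pow_succ, mul_assoc, e₁, ← mul_assoc, e₂, mul_assoc]

end CoreIdentities

/-- The target form: a sum `Σ_{j=1}^{k} c_j X^j` plus a combination of Markov elements. -/
def GoodForm [Invertible q] (F : TLhat K q (n - 1) →ₐ[K] TLhat K q n) (k : ℕ)
    (x : TLhat K q n) : Prop :=
  ∃ cf : ℕ → TLhat K q n, (∀ j, cf j ∈ F.range) ∧
    ∃ M ∈ Submodule.span K {y : TLhat K q n | IsMarkov K q n F y},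
      x = (∑ j ∈ Finset.Icc 1 k, cf j * Xel K q n ^ j) + M

section GoodFormLemmas

variable {K : Type*} [CommRing K] {q : K} [Invertible q] {n : ℕ}
  {F : TLhat K q (n - 1) →ₐ[K] TLhat K q n}

theorem markov_span_leftmul {c : TLhat K q n} (hc : c ∈ F.range) {x : TLhat K q n}
    (hx : x ∈ Submodule.span K {y : TLhat K q n | IsMarkov K q n F y}) :
    c * x ∈ Submodule.span K {y : TLhat K q n | IsMarkov K q n F y} := by
  induction hx using Submodule.span_induction with
  | mem y hy =>
    obtain ⟨A, B, ε, hε, rfl⟩ := hy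
    obtain ⟨A₀, rfl⟩ := hc
    refine Submodule.subset_span ⟨A₀ * A, B, ε, hε, ?_⟩
    rw [map_mul]
    simp only [mul_assoc]
    rfl
  | zero => rw [mul_zero]; exact Submodule.zero_mem _
  | add x y hx hy ihx ihy => rw [mul_add]; exact Submodule.add_mem _ ihx ihy
  | smul a x hx ih => rw [mul_smul_comm]; exact Submodule.smul_mem _ a ih

theorem gf_smul {k : ℕ} {x : TLhat K q n} (a : K) (h : GoodForm K q n F k x) :
    GoodForm K q n F k (a • x) := by
  obtain ⟨cf, hcf, M, hM, he⟩ := h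
  refine ⟨fun j => a • cf j, fun j => Subalgebra.smul_mem _ (hcf j) a,
    a • M, Submodule.smul_mem _ a hM, ?_⟩
  rw [he, smul_add, Finset.smul_sum]
  simp only [smul_mul_assoc]

theorem gf_add {k : ℕ} {x y : TLhat K q n} (hx : GoodForm K q n F k x)
    (hy : GoodForm K q n F k y) : GoodForm K q n F k (x + y) := by
  obtain ⟨cf, hcf, M, hM, he⟩ := hx
  obtain ⟨cg, hcg, N, hN, hf⟩ := hy
  refine ⟨fun j => cf j + cg j, fun j => add_mem (hcf j) (hcg j),
    M + N, Submodule.add_mem _ hM hN, ?_⟩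
  rw [he, hf]
  simp only [add_mul, Finset.sum_add_distrib]
  abel

theorem gf_mono {k k' : ℕ} (hkk : k ≤ k') {x : TLhat K q n}
    (h : GoodForm K q n F k x) : GoodForm K q n F k' x := by
  obtain ⟨cf, hcf, M, hM, he⟩ := h
  refine ⟨fun j => if j ≤ k then cf j else 0,
    fun j => by dsimp only; split <;> [exact hcf j; exact zero_mem _],
    M, hM, ?_⟩
  rw [he]
  congr 1
  rw [← Finset.sum_subset (Finset.Icc_subset_Icc_right hkk)]
  · apply Finset.sum_congr rfl
    intro j hj
    rw [Finset.mem_Icc] at hj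
    dsimp only
    rw [if_pos hj.2]
  · intro x hx hnx
    rw [Finset.mem_Icc] at hx
    have hnx' : ¬ (1 ≤ x ∧ x ≤ k) := by simpa [Finset.mem_Icc] using hnx
    have hxk : ¬ x ≤ k := fun hle => hnx' ⟨hx.1, hle⟩
    dsimp only
    rw [if_neg hxk, zero_mul]

theorem gf_markov {k : ℕ} {x : TLhat K q n} (hx : IsMarkov K q n F x) :
    GoodForm K q n F k x :=
  ⟨fun _ => 0, fun _ => zero_mem _, x, Submodule.subset_span hx, by simp⟩

theorem gf_cX {k : ℕ} (hk : 1 ≤ k) {c : TLhat K q n} (hc : c ∈ F.range) :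
    GoodForm K q n F k (c * Xel K q n ^ k) := by
  refine ⟨fun j => if j = k then c else 0,
    fun j => by dsimp only; split <;> [exact hc; exact zero_mem _],
    0, Submodule.zero_mem _, ?_⟩
  rw [add_zero, Finset.sum_eq_single_of_mem k (by simp [Finset.mem_Icc, hk])]
  · dsimp only
    rw [if_pos rfl]
  · intro b _ hbk
    dsimp only
    rw [if_neg hbk, zero_mul]

theorem gf_leftmul {k : ℕ} {c x : TLhat K q n} (hc : c ∈ F.range)
    (h : GoodForm K q n F k x) : GoodForm K q n F k (c * x) := by
  obtain ⟨cf, hcf, M, hM, he⟩ := h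
  refine ⟨fun j => c * cf j, fun j => mul_mem hc (hcf j),
    c * M, markov_span_leftmul hc hM, ?_⟩
  rw [he, mul_add, Finset.mul_sum]
  simp only [mul_assoc]

end GoodFormLemmas

section MainInduction

variable {K : Type*} [CommRing K] {q : K} [Invertible q] {n : ℕ}
  {F : TLhat K q (n - 1) →ₐ[K] TLhat K q n}

theorem main_ind (hn : 2 ≤ n) (hF : IsF K q n F) (k : ℕ) :
    ∀ s ∈ F.range, ∀ s' ∈ F.range,
      GoodForm K q n F k (Xel K q n ^ k * s * gN K q n (n - 1) * s') := by
  induction k with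
  | zero =>
    intro s hs s' hs'
    obtain ⟨A, rfl⟩ := hs
    obtain ⟨B, rfl⟩ := hs'
    apply gf_markov
    refine ⟨A, B, 1, le_rfl, ?_⟩
    rw [pow_zero, one_mul, pow_one, gg_sigmaTop]
    rfl
  | succ k ih =>
    intro s hs s' hs'
    obtain ⟨s₁, hs₁, e₁⟩ := shift_one hn hF hs
    obtain ⟨s₂, hs₂, e₂⟩ := shift_one hn hF hs'
    obtain ⟨t, ht, et⟩ := shift_pow hn hF k (s₁ * s₂) (mul_mem hs₁ hs₂)
    have hT1 : Xel K q n ^ k * s₁ * Xel K q n * s' = t * Xel K q n ^ (k + 1) := by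
      calc Xel K q n ^ k * s₁ * Xel K q n * s'
          = Xel K q n ^ k * s₁ * (Xel K q n * s') := by rw [mul_assoc]
        _ = Xel K q n ^ k * s₁ * (s₂ * Xel K q n) := by rw [e₂]
        _ = Xel K q n ^ k * (s₁ * s₂) * Xel K q n := by simp only [mul_assoc]
        _ = t * Xel K q n ^ k * Xel K q n := by rw [et]
        _ = t * Xel K q n ^ (k + 1) := by rw [mul_assoc, ← pow_succ]
    have key : Xel K q n ^ (k + 1) * s * gN K q n (n - 1) * s'
        = (q - 1) • (t * Xel K q n ^ (k + 1))
          + q • (Xel K q n ^ k * (s₁ * sInvSub K q n) * gN K q n (n - 1)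
              * (Zel K q n F * s')) := by
      have e0 : Xel K q n ^ (k + 1) * s = Xel K q n ^ k * s₁ * Xel K q n := by
        rw [pow_succ, mul_assoc, e₁, ← mul_assoc]
      calc Xel K q n ^ (k + 1) * s * gN K q n (n - 1) * s'
          = Xel K q n ^ k * s₁ * (Xel K q n * gN K q n (n - 1)) * s' := by
            rw [e0, mul_assoc (Xel K q n ^ k * s₁)]
        _ = Xel K q n ^ k * s₁ * ((q - 1) • Xel K q n
              + q • (sInvSub K q n * (gN K q n (n - 1) * Zel K q n F))) * s' := by
            rw [X_mul_sig hn hF]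
        _ = (q - 1) • (Xel K q n ^ k * s₁ * Xel K q n * s')
              + q • (Xel K q n ^ k * s₁
                  * (sInvSub K q n * (gN K q n (n - 1) * Zel K q n F)) * s') := by
            rw [mul_add, add_mul, mul_smul_comm, mul_smul_comm, smul_mul_assoc,
              smul_mul_assoc]
        _ = (q - 1) • (t * Xel K q n ^ (k + 1))
              + q • (Xel K q n ^ k * (s₁ * sInvSub K q n) * gN K q n (n - 1)
                  * (Zel K q n F * s')) := by
            rw [hT1]
            congr 1
            congr 1
            simp only [mul_assoc]
    rw [key]
    apply gf_add
    · exact gf_smul _ (gf_cX (Nat.le_add_left 1 k) ht)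
    · apply gf_smul
      apply gf_mono (Nat.le_succ k)
      exact ih (s₁ * sInvSub K q n) (mul_mem hs₁ (sInvSub_mem_range hn hF))
        (Zel K q n F * s') (mul_mem (Zel_mem_range hn hF) hs')

end MainInduction

/-- `c X^k g_{σ_n} g_{σ_{n-1}} ⋯ g_{σ_i} = Σ_{j=1}^{h} c_j X^j + M` with
`h ≤ k`, `c_j ∈ Im F_n` and `M` a `K`-linear combination of Markov elements. -/
theorem first_form_reduction
    (K : Type*) [CommRing K] [IsDomain K] [CharZero K]
    (q sq : K) [Invertible q] [Invertible (q + 1)] (hsq : sq * sq = q)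
    (n : ℕ) (hn : 2 ≤ n) (k : ℕ)
    (i : ℕ) (hi1 : 1 ≤ i) (hi2 : i ≤ n + 1)
    (F : TLhat K q (n - 1) →ₐ[K] TLhat K q n) (hF : IsF K q n F)
    (c : TLhat K q n) (hc : c ∈ F.range) :
    ∃ h ≤ k, ∃ cf : ℕ → TLhat K q n, (∀ j, cf j ∈ F.range) ∧
      ∃ M ∈ Submodule.span K {x : TLhat K q n | IsMarkov K q n F x},
        c * Xel K q n ^ k * tailChain K q n i =
          (∑ j ∈ Finset.Icc 1 h, cf j * Xel K q n ^ j) + M := by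
  have hgf : GoodForm K q n F k (c * Xel K q n ^ k * tailChain K q n i) := by
    by_cases hitop : i = n + 1
    · subst hitop
      have htail : tailChain K q n (n + 1) = 1 := by
        rw [tailChain_eq, Nat.sub_self, dc_zero]
      rw [htail, mul_one]
      rcases Nat.eq_zero_or_pos k with hk0 | hk1
      · subst hk0
        rw [pow_zero, mul_one]
        obtain ⟨A, rfl⟩ := hc
        apply gf_markov
        refine ⟨A, 1, 0, by omega, ?_⟩
        rw [pow_zero, mul_one, map_one, mul_one]
        rfl
      · exact gf_cX hk1 hc
    · have htail : tailChain K q n i = gN K q n (n - 1) * dc K q n (n - 2) (n - i) := by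
        have h := dc_succ_left (K := K) (q := q) (n := n) (n - 1) (n - i)
        rw [show n - i + 1 = n + 1 - i from by omega,
          show n - 1 - 1 = n - 2 from by omega] at h
        rw [tailChain_eq, h]
      have hmain := main_ind hn hF k 1 (one_mem _) (dc K q n (n - 2) (n - i))
        (dc_mem_range hn hF le_rfl _)
      have heq : c * Xel K q n ^ k * tailChain K q n i
          = c * (Xel K q n ^ k * 1 * gN K q n (n - 1) * dc K q n (n - 2) (n - i)) := by
        rw [htail, mul_one]
        simp only [mul_assoc]
      rw [heq]
      exact gf_leftmul hc hmain
  obtain ⟨cf, hcf, M, hM, he⟩ := hgf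
  exact ⟨k, le_rfl, cf, hcf, M, hM, he⟩
end

section
/- Let r, s be positive integers with r ≤ s. Then there exist h ≤ s, elements c_0,…,c_h in the image of F, and a K-linear combination M of Markov elements such that every trace τ_3 on TL̂_3(q) satisfies τ_3( g_{a_3}·F(t_{a_2})·(g_{σ_1}F(t_{a_2}))^s · g_{a_3} · (g_{σ_1}F(t_{a_2}))^r ) = τ_3( Σ_{j=0}^{h} c_j·Y^j + M ). -/
open FreeAlgebra

variable (K : Type*) [CommRing K] (q : K) (n : ℕ)

/-!
Work modulo the span `𝒮` of commutators, Markov elements and the products `w * Y ^ j`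
(`w ∈ Im F`, `j ≤ s`): a trace sees every element of `𝒮` as some `∑ c_j Y^j + M`, and `𝒮` is
stable under the rotation `x * y ↦ y * x`. Conjugation by `Y = g_{σ₂} g_{σ₁} g_{a₃}` swaps
`g_{σ₁}` and `F(t_{a₂})`, so `Y` normalises `Im F`. Writing `g_{a₃} = g_{σ₁}⁻¹ g_{σ₂}⁻¹ Y` and
expanding `g⁻¹ = q⁻¹ (g - (q - 1))`, rotations reduce the given word to the two families
`Y^j g_{σ₂} w` (by induction on `j`) and `Y^j g_{σ₂} (g_{σ₁} F(t_{a₂}))^m g_{σ₁} g_{σ₂} w`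
with `m + j ≤ s` (by induction on `m`, each step trading a factor `g_{σ₁} F(t_{a₂})` for a `Y`).
-/

section Quadratic

variable {K A : Type*} [CommRing K] [Ring A] [Algebra K A] {q : K} [Invertible q]

@[reducible] def invertibleOfQuadratic {g : A} (hg : g * g = (q - 1) • g + algebraMap K A q) :
    Invertible g where
  invOf := ⅟q • (g - algebraMap K A (q - 1))
  invOf_mul_self := by
    simp only [Algebra.algebraMap_eq_smul_one] at hg ⊢
    rw [smul_mul_assoc, sub_mul, hg, smul_mul_assoc, one_mul, add_sub_cancel_left, smul_smul,
      invOf_mul_self, one_smul]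
  mul_invOf_self := by
    simp only [Algebra.algebraMap_eq_smul_one] at hg ⊢
    rw [mul_smul_comm, mul_sub, hg, mul_smul_comm, mul_one, add_sub_cancel_left, smul_smul,
      invOf_mul_self, one_smul]

theorem eq_smul_invOf_add {g : A} [Invertible g]
    (h : ⅟g = ⅟q • (g - algebraMap K A (q - 1))) :
    g = q • ⅟g + algebraMap K A (q - 1) := by
  rw [h, smul_smul, mul_invOf_self, one_smul, sub_add_cancel]

theorem mul_mul_mem_iff_mul_invOf_mul_mem {S : Submodule K A} {g : A} [Invertible g]
    (h : ⅟g = ⅟q • (g - algebraMap K A (q - 1))) {x z : A} (hxz : x * z ∈ S) :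
    x * g * z ∈ S ↔ x * ⅟g * z ∈ S := by
  have key : x * g * z = q • (x * ⅟g * z) + (q - 1) • (x * z) := by
    conv_lhs => rw [eq_smul_invOf_add h]
    simp only [mul_add, add_mul, mul_smul_comm, smul_mul_assoc, Algebra.algebraMap_eq_smul_one,
      mul_one]
  rw [key, S.add_mem_iff_left (S.smul_mem _ hxz)]
  refine ⟨fun hq => ?_, S.smul_mem q⟩
  simpa [smul_smul] using S.smul_mem ⅟q hq

theorem mul_mem_iff_invOf_mul_mem {S : Submodule K A} {g : A} [Invertible g]
    (h : ⅟g = ⅟q • (g - algebraMap K A (q - 1))) {z : A} (hz : z ∈ S) :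
    g * z ∈ S ↔ ⅟g * z ∈ S := by
  simpa only [one_mul] using
    mul_mul_mem_iff_mul_invOf_mul_mem (x := 1) h (by rwa [one_mul])

end Quadratic

section Commutators

variable (K A : Type*) [CommRing K] [Ring A] [Algebra K A]

def commutatorSpan : Submodule K A :=
  Submodule.span K {z | ∃ x y : A, z = x * y - y * x}

variable {K A}

theorem mul_swap_mem {S : Submodule K A} (hS : commutatorSpan K A ≤ S) {x y : A}
    (h : x * y ∈ S) : y * x ∈ S := by
  have hc : y * x - x * y ∈ S := hS (Submodule.subset_span ⟨y, x, rfl⟩)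
  simpa using S.add_mem hc h

theorem IsTrace.map_eq_zero_of_mem_commutatorSpan {τ : A →ₗ[K] K} (hτ : IsTrace K τ) {z : A}
    (hz : z ∈ commutatorSpan K A) : τ z = 0 := by
  induction hz using Submodule.span_induction with
  | mem z hz =>
    obtain ⟨x, y, rfl⟩ := hz
    rw [map_sub, hτ x y, sub_self]
  | zero => exact map_zero τ
  | add x y _ _ hx hy => rw [map_add, hx, hy, add_zero]
  | smul a x _ hx => rw [map_smul, hx, smul_zero]

theorem exists_eq_sum_of_mem_span_mul_pow {W : Subalgebra K A} {y : A} {s : ℕ} {z : A}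
    (hz : z ∈ Submodule.span K {x | ∃ w ∈ W, ∃ j ≤ s, x = w * y ^ j}) :
    ∃ c : ℕ → A, (∀ j, c j ∈ W) ∧ z = ∑ j ∈ Finset.range (s + 1), c j * y ^ j := by
  classical
  induction hz using Submodule.span_induction with
  | mem x hx =>
    obtain ⟨w, hw, j, hj, rfl⟩ := hx
    refine ⟨Pi.single j w, fun i => ?_, ?_⟩
    · rcases eq_or_ne i j with rfl | hij
      · simpa using hw
      · simp [hij, W.zero_mem]
    · rw [Finset.sum_eq_single_of_mem j (Finset.mem_range.2 (Nat.lt_succ_of_le hj))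
        (fun i _ hij => by simp [hij]), Pi.single_eq_same]
  | zero => exact ⟨0, fun _ => W.zero_mem, by simp⟩
  | add x x' _ _ hx hx' =>
    obtain ⟨c, hc, rfl⟩ := hx
    obtain ⟨c', hc', rfl⟩ := hx'
    exact ⟨c + c', fun j => W.add_mem (hc j) (hc' j), by
      simp only [Pi.add_apply, add_mul, Finset.sum_add_distrib]⟩
  | smul a x _ hx =>
    obtain ⟨c, hc, rfl⟩ := hx
    exact ⟨a • c, fun j => W.smul_mem (hc j) a, by
      simp only [Pi.smul_apply, smul_mul_assoc, Finset.smul_sum]⟩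

end Commutators

section Generators

variable {K : Type*} [CommRing K] {q : K} {n : ℕ}

theorem gg_mul_self (i : Fin (n + 1)) :
    gg K q n i * gg K q n i = (q - 1) • gg K q n i + algebraMap K _ q := by
  have h := RingQuot.mkAlgHom_rel K (ATLRel.quad (K := K) (q := q) (n := n) i)
  simp only [map_mul, map_add, map_smul, AlgHom.commutes] at h
  exact h

theorem AlgHom.exists_semiconjBy_of_forall_gg {A : Type*} [Ring A] [Algebra K A]
    (F : TLhat K q n →ₐ[K] A) {y : A} (hy : ∀ i, ∃ w ∈ F.range, SemiconjBy y (F (gg K q n i)) w)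
    {x : A} (hx : x ∈ F.range) : ∃ w ∈ F.range, SemiconjBy y x w := by
  obtain ⟨x, rfl⟩ := hx
  obtain ⟨p, rfl⟩ := RingQuot.mkAlgHom_surjective K (ATLRel K q n) x
  induction p using FreeAlgebra.induction with
  | grade0 r =>
    refine ⟨algebraMap K A r, F.range.algebraMap_mem r, ?_⟩
    simp only [AlgHom.commutes, AlgHom.toRingHom_eq_coe, RingHom.coe_coe]
    exact (Algebra.commutes r y).symm
  | grade1 i => exact hy i
  | mul p p' hp hp' =>
    obtain ⟨w, hw, h⟩ := hp
    obtain ⟨w', hw', h'⟩ := hp'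
    exact ⟨w * w', F.range.mul_mem hw hw', by simpa only [map_mul] using h.mul_right h'⟩
  | add p p' hp hp' =>
    obtain ⟨w, hw, h⟩ := hp
    obtain ⟨w', hw', h'⟩ := hp'
    exact ⟨w + w', F.range.add_mem hw hw', by simpa only [map_add] using h.add_right h'⟩

variable [Invertible q]

noncomputable instance (i : Fin (n + 1)) : Invertible (gg K q n i) :=
  invertibleOfQuadratic (gg_mul_self i)

theorem invOf_gg (i : Fin (n + 1)) :
    ⅟(gg K q n i) = ⅟q • (gg K q n i - algebraMap K _ (q - 1)) := rfl

end Generators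

namespace AffineTL3

variable {K : Type*} [CommRing K] {q : K}

local notation "g₁" => gg K q 2 0
local notation "g₂" => gg K q 2 1
local notation "gₐ" => gg K q 2 2
local notation "Y" => Xel K q 2

theorem Xel_two : Y = g₂ * g₁ * gₐ := by
  simp [Xel, List.ofFn_succ, mul_assoc]

theorem braid_g₁_g₂ : g₁ * g₂ * g₁ = g₂ * g₁ * g₂ := by
  have h := RingQuot.mkAlgHom_rel K
    (ATLRel.braid_ss (K := K) (q := q) (n := 2) 0 1 (by decide) rfl)
  simp only [map_mul] at h
  exact h

theorem braid_g₁_gₐ : g₁ * gₐ * g₁ = gₐ * g₁ * gₐ := by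
  have h := RingQuot.mkAlgHom_rel K
    (ATLRel.braid_sa (K := K) (q := q) (n := 2) le_rfl 0 (Or.inl rfl))
  simp only [map_mul] at h
  exact h

theorem braid_g₂_gₐ : g₂ * gₐ * g₂ = gₐ * g₂ * gₐ := by
  have h := RingQuot.mkAlgHom_rel K
    (ATLRel.braid_sa (K := K) (q := q) (n := 2) le_rfl 1 (Or.inr rfl))
  simp only [map_mul] at h
  exact h

variable [Invertible q]

theorem gₐ_mul_conj : gₐ * (g₂ * gₐ * ⅟g₂) = g₂ * gₐ := by
  rw [← mul_assoc, ← mul_assoc, ← braid_g₂_gₐ, mul_invOf_cancel_right]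

theorem semiconjBy_Xel_g₁ : SemiconjBy Y g₁ (g₂ * gₐ * ⅟g₂) := by
  calc Y * g₁ = g₂ * (g₁ * gₐ * g₁) := by rw [Xel_two]; simp only [mul_assoc]
    _ = g₂ * gₐ * ⅟g₂ * Y := by
      rw [braid_g₁_gₐ, Xel_two]; simp only [mul_assoc, invOf_mul_cancel_left]

theorem semiconjBy_Xel_conj : SemiconjBy Y (g₂ * gₐ * ⅟g₂) g₁ := by
  calc Y * (g₂ * gₐ * ⅟g₂) = g₂ * g₁ * (gₐ * g₂ * gₐ) * ⅟g₂ := by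
        rw [Xel_two]; simp only [mul_assoc]
    _ = g₂ * g₁ * g₂ * gₐ := by
      rw [← braid_g₂_gₐ]; simp only [mul_assoc, mul_invOf_self, mul_one]
    _ = g₁ * Y := by rw [← braid_g₁_g₂, Xel_two]; simp only [mul_assoc]

theorem Xel_mul_invOf_g₂ : Y * ⅟g₂ = ⅟g₁ * g₂ * g₁ * (g₂ * gₐ * ⅟g₂) := by
  calc Y * ⅟g₂ = ⅟g₁ * (g₁ * g₂ * g₁) * gₐ * ⅟g₂ := by
        rw [Xel_two]; simp only [mul_assoc, invOf_mul_cancel_left]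
    _ = _ := by rw [braid_g₁_g₂]; simp only [mul_assoc]

theorem g₁_mul_Xel_mul_invOf_g₂ : g₁ * Y * ⅟g₂ = g₂ * g₁ * (g₂ * gₐ * ⅟g₂) := by
  rw [mul_assoc, Xel_mul_invOf_g₂]; simp only [mul_assoc, mul_invOf_cancel_left]

theorem Xel_mul_invOf_gₐ : Y * ⅟gₐ = g₂ * g₁ := by
  rw [Xel_two, mul_invOf_cancel_right]

theorem gₐ_eq : gₐ = ⅟g₁ * ⅟g₂ * Y := by
  rw [Xel_two]; simp only [mul_assoc, invOf_mul_cancel_left]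

theorem g₂_mul_invOf_mul_invOf : g₂ * ⅟g₁ * ⅟g₂ = ⅟g₁ * ⅟g₂ * g₁ := by
  calc g₂ * ⅟g₁ * ⅟g₂ = ⅟g₁ * ⅟g₂ * (g₂ * g₁ * g₂) * ⅟g₁ * ⅟g₂ := by
        simp only [mul_assoc, invOf_mul_cancel_left]
    _ = _ := by
      rw [← braid_g₁_g₂]; simp only [mul_assoc, mul_invOf_self, mul_one]

variable (F : TLhat K q 1 →ₐ[K] TLhat K q 2) (s : ℕ)

def markovXelSpan : Submodule K (TLhat K q 2) :=
  commutatorSpan K _ ⊔ Submodule.span K {x | IsMarkov K q 2 F x} ⊔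
    Submodule.span K {x | ∃ w ∈ F.range, ∃ j ≤ s, x = w * Y ^ j}

local notation "𝒮" => markovXelSpan F s
local notation "Fₐ" => F (gg K q 1 1)

variable {F s}

theorem mul_swap_mem_markovXelSpan {x y : TLhat K q 2} (h : x * y ∈ 𝒮) : y * x ∈ 𝒮 :=
  mul_swap_mem (le_sup_left.trans le_sup_left) h

theorem mul_g₂_mul_mem {v w : TLhat K q 2} (hv : v ∈ F.range) (hw : w ∈ F.range) :
    v * g₂ * w ∈ 𝒮 := by
  obtain ⟨A, rfl⟩ := hv
  obtain ⟨B, rfl⟩ := hw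
  exact Submodule.mem_sup_left (Submodule.mem_sup_right
    (Submodule.subset_span ⟨A, B, 1, le_rfl, by simp [sigmaTop]⟩))

theorem mul_pow_mem {w : TLhat K q 2} (hw : w ∈ F.range) {j : ℕ} (hj : j ≤ s) :
    w * Y ^ j ∈ 𝒮 :=
  Submodule.mem_sup_right (Submodule.subset_span ⟨w, hw, j, hj, rfl⟩)

variable (hF : IsF K q 2 F)
include hF

theorem F_tσ : F (gg K q 1 0) = g₁ := hF.1 0 (by decide)

theorem F_ta : Fₐ = g₂ * gₐ * ⅟g₂ := hF.2

theorem g₂_mul_g₁_mul_F_ta : g₂ * g₁ * Fₐ = g₁ * Y * ⅟g₂ := by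
  rw [F_ta hF, g₁_mul_Xel_mul_invOf_g₂]

theorem gₐ_mul_F_ta : gₐ * Fₐ = g₂ * gₐ := by rw [F_ta hF, gₐ_mul_conj]

theorem semiconjBy_Xel_g₁_mul_F_ta : SemiconjBy Y (g₁ * Fₐ) (Fₐ * g₁) := by
  rw [F_ta hF]; exact semiconjBy_Xel_g₁.mul_right semiconjBy_Xel_conj

theorem g₁_mem_range : g₁ ∈ F.range := ⟨gg K q 1 0, F_tσ hF⟩

theorem invOf_g₁_mem_range : ⅟g₁ ∈ F.range := by
  rw [invOf_gg]
  exact F.range.smul_mem (F.range.sub_mem (g₁_mem_range hF) (F.range.algebraMap_mem _)) _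

theorem exists_semiconjBy_Xel {w : TLhat K q 2} (hw : w ∈ F.range) :
    ∃ w' ∈ F.range, SemiconjBy Y w w' := by
  refine F.exists_semiconjBy_of_forall_gg (fun i => ?_) hw
  match i with
  | 0 => exact ⟨Fₐ, ⟨_, rfl⟩, by rw [F_tσ hF, F_ta hF]; exact semiconjBy_Xel_g₁⟩
  | 1 => exact ⟨g₁, g₁_mem_range hF, by rw [F_ta hF]; exact semiconjBy_Xel_conj⟩

theorem exists_semiconjBy_Xel_pow (j : ℕ) {w : TLhat K q 2} (hw : w ∈ F.range) :
    ∃ w' ∈ F.range, SemiconjBy (Y ^ j) w w' := by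
  induction j generalizing w with
  | zero => exact ⟨w, hw, by rw [pow_zero]; exact SemiconjBy.one_left w⟩
  | succ j ih =>
    obtain ⟨w₁, hw₁, h₁⟩ := exists_semiconjBy_Xel hF hw
    obtain ⟨w₂, hw₂, h₂⟩ := ih hw₁
    exact ⟨w₂, hw₂, by rw [pow_succ]; exact h₂.mul_left h₁⟩

theorem pow_mul_mem {w : TLhat K q 2} (hw : w ∈ F.range) {j : ℕ} (hj : j ≤ s) :
    Y ^ j * w ∈ 𝒮 := by
  obtain ⟨w', hw', h⟩ := exists_semiconjBy_Xel_pow hF j hw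
  rw [h.eq]
  exact mul_pow_mem hw' hj

theorem pow_mul_mul_mem {j : ℕ} {v x : TLhat K q 2} (hv : v ∈ F.range)
    (h : ∀ v' ∈ F.range, Y ^ j * (x * v') ∈ 𝒮) : Y ^ j * (v * x) ∈ 𝒮 := by
  obtain ⟨v', hv', hsc⟩ := exists_semiconjBy_Xel_pow hF j hv
  rw [← mul_assoc, hsc.eq, mul_assoc]
  exact mul_swap_mem_markovXelSpan (by simpa only [mul_assoc] using h v' hv')

theorem pow_mul_g₂_mul_mem {j : ℕ} (hj : j ≤ s) {w : TLhat K q 2} (hw : w ∈ F.range) :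
    Y ^ j * g₂ * w ∈ 𝒮 := by
  induction j generalizing w with
  | zero => simpa using mul_g₂_mul_mem F.range.one_mem hw
  | succ j ih =>
    rw [mul_mul_mem_iff_mul_invOf_mul_mem (invOf_gg 1) (pow_mul_mem hF hw hj)]
    have e : Y ^ (j + 1) * ⅟g₂ * w = Y ^ j * (⅟g₁ * (g₂ * (g₁ * Fₐ * w))) := by
      rw [pow_succ, mul_assoc (Y ^ j), Xel_mul_invOf_g₂, F_ta hF]; simp only [mul_assoc]
    rw [e]
    refine pow_mul_mul_mem hF (invOf_g₁_mem_range hF) fun v hv => ?_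
    have hw' : g₁ * Fₐ * w * v ∈ F.range :=
      F.range.mul_mem (F.range.mul_mem (F.range.mul_mem (g₁_mem_range hF) ⟨_, rfl⟩) hw) hv
    simpa only [mul_assoc] using ih (Nat.le_of_succ_le hj) hw'

theorem pow_g₂_mul_pow_mul_g₁_g₂_mem {m j : ℕ} (hmj : m + j ≤ s) {w : TLhat K q 2}
    (hw : w ∈ F.range) : Y ^ j * g₂ * (g₁ * Fₐ) ^ m * g₁ * g₂ * w ∈ 𝒮 := by
  induction m generalizing j w with
  | zero =>
    have e : Y ^ j * g₂ * (g₁ * Fₐ) ^ 0 * g₁ * g₂ * w = Y ^ j * (g₁ * (g₂ * (g₁ * w))) := by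
      calc _ = Y ^ j * (g₂ * g₁ * g₂) * w := by simp only [pow_zero, mul_one, mul_assoc]
        _ = _ := by rw [← braid_g₁_g₂]; simp only [mul_assoc]
    rw [e]
    refine pow_mul_mul_mem hF (g₁_mem_range hF) fun v hv => ?_
    simpa only [mul_assoc] using pow_mul_g₂_mul_mem hF (by omega)
      (F.range.mul_mem (F.range.mul_mem (g₁_mem_range hF) hw) hv)
  | succ m ih =>
    have hV : (g₁ * Fₐ) ^ m * g₁ ∈ F.range :=
      F.range.mul_mem (F.range.pow_mem (F.range.mul_mem (g₁_mem_range hF) ⟨_, rfl⟩) m)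
        (g₁_mem_range hF)
    set Z := (g₁ * Fₐ) ^ m * g₁ * g₂ * w
    have e : Y ^ j * g₂ * (g₁ * Fₐ) ^ (m + 1) * g₁ * g₂ * w = Y ^ j * g₁ * Y * ⅟g₂ * Z := by
      calc _ = Y ^ j * (g₂ * g₁ * Fₐ) * Z := by simp only [Z, pow_succ', mul_assoc]
        _ = _ := by rw [g₂_mul_g₁_mul_F_ta hF]; simp only [mul_assoc]
    have hZ : Y ^ j * g₁ * Y * Z ∈ 𝒮 := by
      rw [show Y ^ j * g₁ * Y * Z = Y ^ j * (g₁ * (Y * Z)) by simp only [mul_assoc]]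
      refine pow_mul_mul_mem hF (g₁_mem_range hF) fun v hv => ?_
      have hY : Y ^ j * (Y * Z * v) = Y ^ (j + 1) * ((g₁ * Fₐ) ^ m * g₁ * (g₂ * (w * v))) := by
        rw [pow_succ]; simp only [Z, mul_assoc]
      rw [hY]
      refine pow_mul_mul_mem hF hV fun v' hv' => ?_
      simpa only [mul_assoc] using pow_mul_g₂_mul_mem hF (by omega)
        (F.range.mul_mem (F.range.mul_mem hw hv) hv')
    rw [e, ← mul_mul_mem_iff_mul_invOf_mul_mem (invOf_gg 1) hZ,
      show Y ^ j * g₁ * Y * g₂ * Z = Y ^ j * (g₁ * (Y * g₂ * Z)) by simp only [mul_assoc]]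
    refine pow_mul_mul_mem hF (g₁_mem_range hF) fun v hv => ?_
    simpa only [Z, pow_succ, mul_assoc] using ih (j := j + 1) (by omega) (F.range.mul_mem hw hv)

theorem invOf_mul_invOf_mul_Xel_mul_g₂_mem (hs : 1 ≤ s) {v : TLhat K q 2}
    (hv : v ∈ F.range) : ⅟g₁ * ⅟g₂ * v * Y * g₂ ∈ 𝒮 := by
  apply mul_swap_mem_markovXelSpan
  rw [show g₂ * (⅟g₁ * ⅟g₂ * v * Y) = g₂ * ⅟g₁ * ⅟g₂ * v * Y by simp only [mul_assoc],
    g₂_mul_invOf_mul_invOf]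
  apply mul_swap_mem_markovXelSpan
  rw [show Y * (⅟g₁ * ⅟g₂ * g₁ * v) = Y ^ 1 * (⅟g₁ * (⅟g₂ * (g₁ * v))) by
    simp only [pow_one, mul_assoc]]
  refine pow_mul_mul_mem hF (invOf_g₁_mem_range hF) fun w hw => ?_
  have hw' : g₁ * v * w ∈ F.range := F.range.mul_mem (F.range.mul_mem (g₁_mem_range hF) hv) hw
  rw [show Y ^ 1 * (⅟g₂ * (g₁ * v) * w) = Y ^ 1 * ⅟g₂ * (g₁ * v * w) by simp only [mul_assoc],
    ← mul_mul_mem_iff_mul_invOf_mul_mem (invOf_gg 1) (pow_mul_mem hF hw' hs)]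
  exact pow_mul_g₂_mul_mem hF hs hw'

theorem invOf_mul_invOf_mul_pow_mul_g₂_mem {w : TLhat K q 2} (hw : w ∈ F.range) :
    ⅟g₁ * ⅟g₂ * (Fₐ * g₁) ^ s * g₂ * g₁ * w * g₂ ∈ 𝒮 := by
  have hsc : SemiconjBy g₁ ((Fₐ * g₁) ^ s) ((g₁ * Fₐ) ^ s) :=
    SemiconjBy.pow_right (mul_assoc _ _ _).symm s
  have hw' : g₁ * w * ⅟g₁ ∈ F.range :=
    F.range.mul_mem (F.range.mul_mem (g₁_mem_range hF) hw) (invOf_g₁_mem_range hF)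
  have hV : (g₁ * Fₐ) ^ s * g₁ ∈ F.range :=
    F.range.mul_mem (F.range.pow_mem (F.range.mul_mem (g₁_mem_range hF) ⟨_, rfl⟩) s)
      (g₁_mem_range hF)
  have hM : (g₁ * Fₐ) ^ s * g₁ * g₂ * (g₁ * w * ⅟g₁) ∈ 𝒮 := mul_g₂_mul_mem hV hw'
  have e₁ : g₂ * (⅟g₁ * ⅟g₂ * (Fₐ * g₁) ^ s * g₂ * g₁ * w) =
      ⅟g₁ * (⅟g₂ * (g₁ * Fₐ) ^ s * g₁ * g₂ * g₁ * w) := by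
    calc _ = g₂ * ⅟g₁ * ⅟g₂ * (Fₐ * g₁) ^ s * g₂ * g₁ * w := by simp only [mul_assoc]
      _ = ⅟g₁ * ⅟g₂ * (g₁ * (Fₐ * g₁) ^ s) * g₂ * g₁ * w := by
          rw [g₂_mul_invOf_mul_invOf]; simp only [mul_assoc]
      _ = _ := by rw [hsc.eq]; simp only [mul_assoc]
  have e₂ : ⅟g₂ * (g₁ * Fₐ) ^ s * g₁ * g₂ * g₁ * w * ⅟g₁ =
      ⅟g₂ * ((g₁ * Fₐ) ^ s * g₁ * g₂ * (g₁ * w * ⅟g₁)) := by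
    simp only [mul_assoc]
  apply mul_swap_mem_markovXelSpan
  rw [e₁]
  apply mul_swap_mem_markovXelSpan
  rw [e₂, ← mul_mem_iff_invOf_mul_mem (invOf_gg 1) hM]
  simpa only [pow_zero, one_mul, mul_assoc] using
    pow_g₂_mul_pow_mul_g₁_g₂_mem hF (m := s) (j := 0) (add_zero s).le hw'

theorem mem_markovXelSpan (r : ℕ) (hs : 1 ≤ s) :
    gₐ * Fₐ * (g₁ * Fₐ) ^ s * gₐ * (g₁ * Fₐ) ^ r ∈ 𝒮 := by
  have hYV := semiconjBy_Xel_g₁_mul_F_ta hF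
  have hFg : Fₐ * g₁ ∈ F.range := F.range.mul_mem ⟨_, rfl⟩ (g₁_mem_range hF)
  have hP₁ : ⅟g₁ * ⅟g₂ * (Fₐ * g₁) ^ s * Y * ((g₁ * Fₐ) ^ r * g₂) ∈ 𝒮 := by
    have e : ⅟g₁ * ⅟g₂ * (Fₐ * g₁) ^ s * Y * ((g₁ * Fₐ) ^ r * g₂) =
        ⅟g₁ * ⅟g₂ * ((Fₐ * g₁) ^ s * (Fₐ * g₁) ^ r) * Y * g₂ := by
      calc _ = ⅟g₁ * ⅟g₂ * (Fₐ * g₁) ^ s * (Y * (g₁ * Fₐ) ^ r) * g₂ := by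
            simp only [mul_assoc]
        _ = _ := by rw [(hYV.pow_right r).eq]; simp only [mul_assoc]
    rw [e]
    exact invOf_mul_invOf_mul_Xel_mul_g₂_mem hF hs
      (F.range.mul_mem (F.range.pow_mem hFg s) (F.range.pow_mem hFg r))
  have e₁ : gₐ * Fₐ * (g₁ * Fₐ) ^ s * gₐ * (g₁ * Fₐ) ^ r =
      g₂ * (gₐ * (g₁ * Fₐ) ^ s * gₐ * (g₁ * Fₐ) ^ r) := by
    rw [gₐ_mul_F_ta hF]; simp only [mul_assoc]
  have e₂ : gₐ * (g₁ * Fₐ) ^ s * gₐ * (g₁ * Fₐ) ^ r * g₂ =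
      ⅟g₁ * ⅟g₂ * (Fₐ * g₁) ^ s * Y * gₐ * ((g₁ * Fₐ) ^ r * g₂) := by
    calc _ = ⅟g₁ * ⅟g₂ * (Y * (g₁ * Fₐ) ^ s) * gₐ * ((g₁ * Fₐ) ^ r * g₂) := by
          rw [← mul_assoc (⅟g₁ * ⅟g₂) Y, ← gₐ_eq]; simp only [mul_assoc]
      _ = _ := by rw [(hYV.pow_right s).eq]; simp only [mul_assoc]
  rw [e₁]
  apply mul_swap_mem_markovXelSpan
  rw [e₂, mul_mul_mem_iff_mul_invOf_mul_mem (invOf_gg 2) hP₁]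
  have e₃ : ⅟g₁ * ⅟g₂ * (Fₐ * g₁) ^ s * Y * ⅟gₐ * ((g₁ * Fₐ) ^ r * g₂) =
      ⅟g₁ * ⅟g₂ * (Fₐ * g₁) ^ s * g₂ * g₁ * (g₁ * Fₐ) ^ r * g₂ := by
    rw [mul_assoc _ Y, Xel_mul_invOf_gₐ]; simp only [mul_assoc]
  rw [e₃]
  exact invOf_mul_invOf_mul_pow_mul_g₂_mem hF (F.range.pow_mem
    (F.range.mul_mem (g₁_mem_range hF) ⟨_, rfl⟩) r)

end AffineTL3

open AffineTL3 in
theorem lemma_5_1_8_general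
    (K : Type*) [CommRing K]
    (q : K) [Invertible q]
    (r s : ℕ) (hs : 1 ≤ s)
    (F : TLhat K q 1 →ₐ[K] TLhat K q 2) (hF : IsF K q 2 F) :
    ∃ h ≤ s, ∃ c : ℕ → TLhat K q 2, (∀ j, c j ∈ F.range) ∧
      ∃ M ∈ Submodule.span K {x : TLhat K q 2 | IsMarkov K q 2 F x},
        ∀ τ : TLhat K q 2 →ₗ[K] K, IsTrace K τ →
          τ (gg K q 2 2 * F (gg K q 1 1) * (gg K q 2 0 * F (gg K q 1 1)) ^ s *
              gg K q 2 2 * (gg K q 2 0 * F (gg K q 1 1)) ^ r) =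
          τ ((∑ j ∈ Finset.range (h + 1),
              c j * (gg K q 2 1 * gg K q 2 0 * gg K q 2 2) ^ j) + M) := by
  obtain ⟨x, hx, t, ht, hxt⟩ := Submodule.mem_sup.1 (mem_markovXelSpan hF r hs)
  obtain ⟨z, hz, M, hM, rfl⟩ := Submodule.mem_sup.1 hx
  obtain ⟨c, hc, rfl⟩ := exists_eq_sum_of_mem_span_mul_pow ht
  refine ⟨s, le_rfl, c, hc, M, hM, fun τ hτ => ?_⟩
  rw [← hxt, ← Xel_two, map_add, map_add, map_add, hτ.map_eq_zero_of_mem_commutatorSpan hz,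
    zero_add, add_comm (τ M)]

/-- Lemma 5.1.8: for `1 ≤ r ≤ s`, every trace `τ_3` on `TL̂_3(q)`
satisfies `τ_3(g_{a_3} F(t_{a_2}) (g_{σ_1}F(t_{a_2}))^s g_{a_3} (g_{σ_1}F(t_{a_2}))^r)
= τ_3(Σ_{j=0}^{h} c_j Y^j + M)` with `h ≤ s`, `c_j ∈ Im F` and `M` a linear combination
of Markov elements. -/
theorem lemma_5_1_8
    (K : Type*) [CommRing K] [IsDomain K] [CharZero K]
    (q sq : K) [Invertible q] [Invertible (q + 1)] (hsq : sq * sq = q)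
    (r s : ℕ) (hr : 1 ≤ r) (hs : 1 ≤ s) (hrs : r ≤ s)
    (F : TLhat K q 1 →ₐ[K] TLhat K q 2) (hF : IsF K q 2 F) :
    ∃ h ≤ s, ∃ c : ℕ → TLhat K q 2, (∀ j, c j ∈ F.range) ∧
      ∃ M ∈ Submodule.span K {x : TLhat K q 2 | IsMarkov K q 2 F x},
        ∀ τ : TLhat K q 2 →ₗ[K] K, IsTrace K τ →
          τ (gg K q 2 2 * F (gg K q 1 1) * (gg K q 2 0 * F (gg K q 1 1)) ^ s *
              gg K q 2 2 * (gg K q 2 0 * F (gg K q 1 1)) ^ r) =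
          τ ((∑ j ∈ Finset.range (h + 1),
              c j * (gg K q 2 1 * gg K q 2 0 * gg K q 2 2) ^ j) + M) :=
  lemma_5_1_8_general K q r s hs F hF
end
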